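/- Let M = M₁ *_B M₂ be a tracial amalgamated free product with B mixing in M₂. Then for reduced words x = x₁⋯xₙ and y = y₁⋯yₘ with letters alternating in M₁^o, M₂^o and first and last letters of both x and y lying in M₂^o, one has the operator identity on L²M: e_B x J y J e_B = e_B(x₁ J y₁ J) e_B (x₂ J y₂ J) e_B ⋯ e_B(xₙ J yₙ J) e_B when n = m, and e_B x J y J e_B = 0 when n ≠ m. Here e_B is the Jones projection onto L²B and J the modular conjugation of M. -/

import Mathlib

open scoped InnerProductSpace

set_option maxHeartbeats 1000000
set_option linter.unusedSectionVars false
set_option linter.unusedVariables false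

section AuxPeeling

variable {H : Type*} [NormedAddCommGroup H] [InnerProductSpace ℂ H] [CompleteSpace H]

private lemma aux_ofFn_rev {α : Type*} : ∀ {n : ℕ} (f : Fin n → α),
    List.ofFn (fun i => f i.rev) = (List.ofFn f).reverse
  | 0, _ => by simp
  | n + 1, f => by
    rw [List.ofFn_succ' f, List.ofFn_succ (f := fun i => f i.rev)]
    simp only [Fin.rev_zero, Fin.rev_succ]
    rw [List.concat_eq_append, List.reverse_append]
    simp [aux_ofFn_rev (fun i => f i.castSucc)]

private lemma aux_star_prod : ∀ (l : List (H →L[ℂ] H)),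
    star l.prod = ((l.map star).reverse).prod
  | [] => by simp
  | a :: l => by
    simp only [List.prod_cons, star_mul, List.map_cons, List.reverse_cons]
    rw [List.prod_append, aux_star_prod l]
    simp

private def nestL (E : (H →L[ℂ] H) →ₗ[ℂ] (H →L[ℂ] H)) :
    List (H →L[ℂ] H) → List (H →L[ℂ] H) → (H →L[ℂ] H) → (H →L[ℂ] H)
  | a :: as, c :: cs, b => nestL E as cs (E (a * b * c))
  | _, _, b => b

private lemma aux_ext_dense (M : StarSubalgebra ℂ (H →L[ℂ] H)) (Ω : H)
    (hcyclic : Dense ((Submodule.span ℂ {ξ : H | ∃ z ∈ M, ξ = z Ω}) : Set H))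
    (T S : H →L[ℂ] H) (h : ∀ z ∈ M, T (z Ω) = S (z Ω)) : T = S := by
  have hsub : (Submodule.span ℂ {ξ : H | ∃ z ∈ M, ξ = z Ω}) ≤ LinearMap.ker ((T - S : H →L[ℂ] H) : H →ₗ[ℂ] H) := by
    rw [Submodule.span_le]
    rintro ξ ⟨z, hz, rfl⟩
    simp only [SetLike.mem_coe, LinearMap.mem_ker, ContinuousLinearMap.coe_coe, ContinuousLinearMap.coe_sub',
      Pi.sub_apply]
    rw [h z hz, sub_self]
  have hdense : Dense ((LinearMap.ker ((T - S : H →L[ℂ] H) : H →ₗ[ℂ] H) : Submodule ℂ H) : Set H) :=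
    hcyclic.mono hsub
  have hclosed : IsClosed ((LinearMap.ker ((T - S : H →L[ℂ] H) : H →ₗ[ℂ] H) : Submodule ℂ H) : Set H) :=
    ContinuousLinearMap.isClosed_ker _
  have huniv : ((LinearMap.ker ((T - S : H →L[ℂ] H) : H →ₗ[ℂ] H) : Submodule ℂ H) : Set H) = Set.univ := by
    rw [← hclosed.closure_eq, hdense.closure_eq]
  ext ξ
  have : ξ ∈ LinearMap.ker ((T - S : H →L[ℂ] H) : H →ₗ[ℂ] H) := by
    have : ξ ∈ ((LinearMap.ker ((T - S : H →L[ℂ] H) : H →ₗ[ℂ] H) : Submodule ℂ H) : Set H) := huniv ▸ Set.mem_univ ξ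
    exact this
  have h0 : (T - S) ξ = 0 := this
  have := sub_eq_zero.1 (by simpa using h0)
  exact this

private lemma bool_trick {a b c d : Bool} (h1 : a ≠ b) (h2 : c ≠ d) (h : a = c) : b = d := by
  revert h1 h2 h; revert a b c d; decide


private lemma aux_prod_fst_mem (M M₁ M₂ : StarSubalgebra ℂ (H →L[ℂ] H))
    (h1M : M₁ ≤ M) (h2M : M₂ ≤ M) (l : List ((H →L[ℂ] H) × Bool))
    (hmem : ∀ p ∈ l, if p.2 then p.1 ∈ M₁ else p.1 ∈ M₂) :
    (l.map Prod.fst).prod ∈ M := by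
  apply list_prod_mem
  intro q hq
  rcases List.mem_map.1 hq with ⟨p, hp, rfl⟩
  have := hmem p hp
  cases h2 : p.2 <;> rw [h2] at this
  · exact h2M this
  · exact h1M this

private lemma aux_free_list (M₁ M₂ : StarSubalgebra ℂ (H →L[ℂ] H))
    (E : (H →L[ℂ] H) →ₗ[ℂ] (H →L[ℂ] H))
    (hfree : ∀ (k : ℕ), 0 < k → ∀ (w : Fin k → (H →L[ℂ] H)) (idx : Fin k → Bool),
      (∀ i, if idx i then w i ∈ M₁ else w i ∈ M₂) →
      (∀ i, E (w i) = 0) →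
      (∀ (i : Fin k) (h : (i : ℕ) + 1 < k), idx i ≠ idx ⟨(i : ℕ) + 1, h⟩) →
      E ((List.ofFn w).prod) = 0)
    (l : List ((H →L[ℂ] H) × Bool)) (hne : l ≠ [])
    (hmem : ∀ p ∈ l, if p.2 then p.1 ∈ M₁ else p.1 ∈ M₂)
    (hcent : ∀ p ∈ l, E p.1 = 0)
    (hch : l.Chain' (fun p q => p.2 ≠ q.2)) :
    E ((l.map Prod.fst).prod) = 0 := by
  have hk : 0 < l.length := List.length_pos_iff.2 hne
  have hmain := hfree l.length hk (fun i => (l.get i).1) (fun i => (l.get i).2)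
    (fun i => hmem _ (l.get_mem i))
    (fun i => hcent _ (l.get_mem i))
    (fun i h => by
      have h' := List.isChain_iff_getElem.1 hch (i : ℕ) (by omega)
      simpa using h')
  have hl : List.ofFn (fun i => (l.get i).1) = l.map Prod.fst := by
    conv_rhs => rw [← List.ofFn_get l]
    rw [List.map_ofFn]
    rfl
  rwa [hl] at hmain


private lemma aux_chain_ofFn {k : ℕ} (σ : Fin k → Bool) (g : Fin k → (H →L[ℂ] H) × Bool)
    (hg : ∀ i, (g i).2 = σ i.rev)
    (halt : ∀ (i j : Fin k), (i : ℕ) + 1 = (j : ℕ) → σ i ≠ σ j) :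
    (List.ofFn g).Chain' (fun p q => p.2 ≠ q.2) := by
  refine List.isChain_iff_getElem.2 ?_
  intro i h
  simp only [List.length_ofFn] at h
  rw [List.getElem_ofFn, List.getElem_ofFn, hg, hg]
  refine (halt _ _ ?_).symm
  simp only [Fin.val_rev, Fin.coe_cast]
  omega

private lemma aux_eB_apply (M : StarSubalgebra ℂ (H →L[ℂ] H)) (Ω : H)
    (E : (H →L[ℂ] H) →ₗ[ℂ] (H →L[ℂ] H)) (eB : H →L[ℂ] H)
    (hJones : ∀ z ∈ M, eB * z * eB = E z * eB) (heBΩ : eB Ω = Ω) :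
    ∀ z ∈ M, eB (z Ω) = E z Ω := by
  intro z hz
  have := congrArg (fun T : H →L[ℂ] H => T Ω) (hJones z hz)
  simpa [ContinuousLinearMap.mul_apply, heBΩ] using this

private lemma aux_star_E (M B : StarSubalgebra ℂ (H →L[ℂ] H)) (hBM : B ≤ M) (Ω : H)
    (hsep : ∀ z ∈ M, z Ω = 0 → z = 0)
    (E : (H →L[ℂ] H) →ₗ[ℂ] (H →L[ℂ] H))
    (hE_range : ∀ z ∈ M, E z ∈ B)
    (eB : H →L[ℂ] H) (heB_sa : IsSelfAdjoint eB)
    (hJones : ∀ z ∈ M, eB * z * eB = E z * eB) (heBΩ : eB Ω = Ω)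
    (hcommB : ∀ b ∈ B, Commute b eB) :
    ∀ z ∈ M, E (star z) = star (E z) := by
  intro z hz
  have h1 : eB * star z * eB = E (star z) * eB := hJones _ (star_mem hz)
  have h2 : star (eB * z * eB) = star (E z * eB) := congrArg star (hJones z hz)
  rw [star_mul, star_mul, heB_sa.star_eq, star_mul, heB_sa.star_eq] at h2
  -- h2 : eB * (star z * eB) = eB * star (E z)
  have h3 : eB * star (E z) = star (E z) * eB :=
    (hcommB _ (star_mem (hE_range z hz))).symm.eq
  have h4 : E (star z) * eB = star (E z) * eB := by
    rw [← h1, ← h3, ← h2, mul_assoc]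
  have h5 : (E (star z) - star (E z)) Ω = 0 := by
    have := congrArg (fun T : H →L[ℂ] H => T Ω) h4
    simp only [ContinuousLinearMap.mul_apply, heBΩ] at this
    simp [ContinuousLinearMap.sub_apply, this]
  have hmem : E (star z) - star (E z) ∈ M :=
    sub_mem (hBM (hE_range _ (star_mem hz))) (hBM (star_mem (hE_range z hz)))
  have := hsep _ hmem h5
  exact sub_eq_zero.1 this


private lemma keyL (M M₁ M₂ B : StarSubalgebra ℂ (H →L[ℂ] H))
    (hB1 : B ≤ M₁) (hB2 : B ≤ M₂) (h1M : M₁ ≤ M) (h2M : M₂ ≤ M)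
    (E : (H →L[ℂ] H) →ₗ[ℂ] (H →L[ℂ] H))
    (hE_range : ∀ z ∈ M, E z ∈ B)
    (hE_proj : ∀ b ∈ B, E b = b)
    (hE_bimod : ∀ b ∈ B, ∀ b' ∈ B, ∀ z ∈ M, E (b * z * b') = b * E z * b')
    (hfreeL : ∀ (l : List ((H →L[ℂ] H) × Bool)), l ≠ [] →
      (∀ p ∈ l, if p.2 then p.1 ∈ M₁ else p.1 ∈ M₂) →
      (∀ p ∈ l, E p.1 = 0) →
      l.Chain' (fun p q => p.2 ≠ q.2) →
      E ((l.map Prod.fst).prod) = 0)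
    (hprodmem : ∀ (l : List ((H →L[ℂ] H) × Bool)),
      (∀ p ∈ l, if p.2 then p.1 ∈ M₁ else p.1 ∈ M₂) → (l.map Prod.fst).prod ∈ M) :
    ∀ (lc rx : List ((H →L[ℂ] H) × Bool)), rx ≠ [] → lc ≠ [] →
    (∀ p ∈ rx, if p.2 then p.1 ∈ M₁ else p.1 ∈ M₂) →
    (∀ p ∈ lc, if p.2 then p.1 ∈ M₁ else p.1 ∈ M₂) →
    (∀ p ∈ rx, E p.1 = 0) → (∀ p ∈ lc, E p.1 = 0) →
    rx.Chain' (fun p q => p.2 ≠ q.2) → lc.Chain' (fun p q => p.2 ≠ q.2) →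
    (∀ p ∈ rx.head?, ∀ q ∈ lc.head?, p.2 = q.2) →
    ∀ b ∈ B,
    E (((rx.map Prod.fst).reverse).prod * b * ((lc.map Prod.fst)).prod)
      = if rx.length = lc.length then nestL E (rx.map Prod.fst) (lc.map Prod.fst) b else 0 := by
  intro lc
  induction lc with
  | nil => intro rx _ h; exact absurd rfl h
  | cons c cs IH =>
    intro rx hrxne _ hmx hmc hcx hcc hchx hchc hhead b hb
    match rx, hrxne with
    | a :: as, _ =>
      have hac : a.2 = c.2 := hhead a rfl c rfl
      have hma := hmx a List.mem_cons_self
      have hmc0 := hmc c List.mem_cons_self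
      rw [← hac] at hmc0
      have hbB : (b : H →L[ℂ] H) ∈ B := hb
      have habc12 : if a.2 then a.1 * b * c.1 ∈ M₁ else a.1 * b * c.1 ∈ M₂ := by
        cases h2 : a.2 <;> rw [h2] at hma hmc0 <;> simp only [Bool.false_eq_true, if_false,
          if_true] at hma hmc0 ⊢
        · exact mul_mem (mul_mem hma (hB2 hbB)) hmc0
        · exact mul_mem (mul_mem hma (hB1 hbB)) hmc0
      have habcM : a.1 * b * c.1 ∈ M := by
        cases h2 : a.2 <;> rw [h2] at habc12
        · exact h2M habc12
        · exact h1M habc12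
      set b' : H →L[ℂ] H := E (a.1 * b * c.1) with hb'def
      have hb'B : b' ∈ B := hE_range _ habcM
      set d : H →L[ℂ] H := a.1 * b * c.1 - b' with hddef
      have hd12 : if a.2 then d ∈ M₁ else d ∈ M₂ := by
        cases h2 : a.2 <;> rw [h2] at habc12 <;> simp only [Bool.false_eq_true, if_false,
          if_true] at habc12 ⊢
        · exact sub_mem habc12 (hB2 hb'B)
        · exact sub_mem habc12 (hB1 hb'B)
      have hdcent : E d = 0 := by
        rw [hddef, map_sub, hb'def, hE_proj _ (hE_range _ habcM), sub_self]
      -- split the word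
      have hsplit : ((a :: as).map Prod.fst).reverse.prod * b * (((c :: cs).map Prod.fst)).prod
          = (as.map Prod.fst).reverse.prod * d * (cs.map Prod.fst).prod
            + (as.map Prod.fst).reverse.prod * b' * (cs.map Prod.fst).prod := by
        simp only [List.map_cons, List.reverse_cons, List.prod_append, List.prod_cons,
          List.prod_nil, mul_one]
        rw [hddef]
        noncomm_ring
      -- the free term vanishes
      have hL1 : E ((as.map Prod.fst).reverse.prod * d * (cs.map Prod.fst).prod) = 0 := by
        have hmemL : ∀ p ∈ as.reverse ++ (d, a.2) :: cs,
            if p.2 then p.1 ∈ M₁ else p.1 ∈ M₂ := by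
          intro p hp
          rcases List.mem_append.1 hp with h | h
          · exact hmx p (List.mem_cons_of_mem _ (List.mem_reverse.1 h))
          · rcases List.mem_cons.1 h with rfl | h
            · exact hd12
            · exact hmc p (List.mem_cons_of_mem _ h)
        have hcentL : ∀ p ∈ as.reverse ++ (d, a.2) :: cs, E p.1 = 0 := by
          intro p hp
          rcases List.mem_append.1 hp with h | h
          · exact hcx p (List.mem_cons_of_mem _ (List.mem_reverse.1 h))
          · rcases List.mem_cons.1 h with rfl | h
            · exact hdcent
            · exact hcc p (List.mem_cons_of_mem _ h)
        have hchas : as.Chain' (fun p q => p.2 ≠ q.2) := hchx.tail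
        have hchasrev : (as.reverse).Chain' (fun p q => p.2 ≠ q.2) :=
          List.isChain_reverse.2 (hchas.imp (fun p q h => h.symm))
        have hchcons : ((d, a.2) :: cs).Chain' (fun p q => p.2 ≠ q.2) := by
          refine List.isChain_cons.2 ?_
          obtain ⟨hh, ht⟩ := List.isChain_cons.1 hchc
          exact ⟨fun y hy => hac ▸ hh y hy, ht⟩
        have hjunc : ∀ p ∈ (as.reverse).getLast?, ∀ q ∈ ((d, a.2) :: cs).head?,
            p.2 ≠ q.2 := by
          intro p hp q hq
          rw [List.getLast?_reverse] at hp
          have hq' : (d, a.2) = q := by simpa using hq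
          subst hq'
          obtain ⟨hh, _⟩ := List.isChain_cons.1 hchx
          exact (hh p hp).symm
        have hchL : (as.reverse ++ (d, a.2) :: cs).Chain' (fun p q => p.2 ≠ q.2) :=
          List.isChain_append.2 ⟨hchasrev, hchcons, hjunc⟩
        have := hfreeL (as.reverse ++ (d, a.2) :: cs) (by simp) hmemL hcentL hchL
        simpa [List.map_append, List.map_reverse, List.prod_append, List.prod_cons,
          mul_assoc] using this
      rw [hsplit, map_add, hL1, zero_add]
      -- now handle the second term by cases
      match as, cs with
      | [], [] =>
        simp [nestL, hE_proj _ hb'B]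
        exact hb'def
      | [], c2 :: cs' =>
        have hCsM : ((c2 :: cs').map Prod.fst).prod ∈ M :=
          hprodmem _ (fun p hp => hmc p (List.mem_cons_of_mem _ hp))
        have hEC : E (((c2 :: cs').map Prod.fst).prod) = 0 :=
          hfreeL _ (by simp) (fun p hp => hmc p (List.mem_cons_of_mem _ hp))
            (fun p hp => hcc p (List.mem_cons_of_mem _ hp)) hchc.tail
        have : E (b' * ((c2 :: cs').map Prod.fst).prod)
            = b' * E (((c2 :: cs').map Prod.fst).prod) * 1 := by
          have := hE_bimod b' hb'B 1 (one_mem B) _ hCsM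
          simpa using this
        rw [if_neg (by simp only [List.length_cons, List.length_nil]; omega)]
        simp only [List.map_nil, List.reverse_nil, List.prod_nil, one_mul]
        rw [this, hEC]
        simp
      | a2 :: as', [] =>
        have hAsM : (((a2 :: as').map Prod.fst).reverse).prod ∈ M := by
          have := hprodmem ((a2 :: as').reverse)
            (fun p hp => hmx p (List.mem_cons_of_mem _ (List.mem_reverse.1 hp)))
          rwa [List.map_reverse] at this
        have hEA : E ((((a2 :: as').map Prod.fst).reverse).prod) = 0 := by
          have hchasrev : ((a2 :: as').reverse).Chain' (fun p q => p.2 ≠ q.2) :=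
            List.isChain_reverse.2 ((hchx.tail).imp (fun p q h => h.symm))
          have := hfreeL ((a2 :: as').reverse) (by simp)
            (fun p hp => hmx p (List.mem_cons_of_mem _ (List.mem_reverse.1 hp)))
            (fun p hp => hcx p (List.mem_cons_of_mem _ (List.mem_reverse.1 hp))) hchasrev
          rwa [List.map_reverse] at this
        have : E ((((a2 :: as').map Prod.fst).reverse).prod * b')
            = 1 * E ((((a2 :: as').map Prod.fst).reverse).prod) * b' := by
          have := hE_bimod 1 (one_mem B) b' hb'B _ hAsM
          simpa using this
        rw [if_neg (by simp only [List.length_cons, List.length_nil]; omega)]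
        simp only [List.map_nil, List.prod_nil, mul_one]
        rw [this, hEA]
        simp
      | a2 :: as', c2 :: cs' =>
        have hhead' : ∀ p ∈ (a2 :: as').head?, ∀ q ∈ (c2 :: cs').head?, p.2 = q.2 := by
          intro p hp q hq
          have hp' : a2 = p := by simpa using hp
          have hq' : c2 = q := by simpa using hq
          subst hp'; subst hq'
          have h1 : a.2 ≠ a2.2 := (List.isChain_cons.1 hchx).1 a2 rfl
          have h2 : c.2 ≠ c2.2 := (List.isChain_cons.1 hchc).1 c2 rfl
          exact bool_trick h1 h2 hac
        have hIH := IH (a2 :: as') (by simp) (by simp)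
          (fun p hp => hmx p (List.mem_cons_of_mem _ hp))
          (fun p hp => hmc p (List.mem_cons_of_mem _ hp))
          (fun p hp => hcx p (List.mem_cons_of_mem _ hp))
          (fun p hp => hcc p (List.mem_cons_of_mem _ hp))
          hchx.tail hchc.tail hhead' b' hb'B
        rw [hIH]
        by_cases hlen : (a2 :: as').length = (c2 :: cs').length
        · rw [if_pos hlen, if_pos (by simpa using hlen)]
          simp only [List.map_cons, nestL, hb'def]
        · rw [if_neg hlen, if_neg (by simpa using hlen)]


private lemma prodApply (M B : StarSubalgebra ℂ (H →L[ℂ] H)) (hBM : B ≤ M) (Ω : H)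
    (E : (H →L[ℂ] H) →ₗ[ℂ] (H →L[ℂ] H))
    (hE_range : ∀ z ∈ M, E z ∈ B) (hE_proj : ∀ b ∈ B, E b = b)
    (eB : H →L[ℂ] H) (heBap : ∀ z ∈ M, eB (z Ω) = E z Ω)
    (Jop : (H →L[ℂ] H) → (H →L[ℂ] H))
    (hJopΩ : ∀ y ∈ M, ∀ z ∈ M, (Jop y) (z Ω) = (z * star y) Ω) :
    ∀ (n : ℕ) (x y : Fin n → (H →L[ℂ] H)), (∀ i, x i ∈ M) → (∀ i, y i ∈ M) →
    ∀ b ∈ B,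
    ((List.ofFn (fun i => eB * (x i * Jop (y i)))).prod * eB) (b Ω)
      = nestL E (List.ofFn fun i => x i.rev) (List.ofFn fun i => star (y i.rev)) b Ω := by
  intro n
  induction n with
  | zero =>
    intro x y _ _ b hb
    simp only [List.ofFn_zero, List.prod_nil, one_mul]
    rw [heBap b (hBM hb), hE_proj b hb]
    simp [nestL]
  | succ n IH =>
    intro x y hx hy b hb
    have hbM : b ∈ M := hBM hb
    have heBb : eB (b Ω) = b Ω := by rw [heBap b hbM, hE_proj b hb]
    -- unfold the product, splitting off the last factor
    rw [List.ofFn_succ' (fun i => eB * (x i * Jop (y i)))]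
    simp only [List.concat_eq_append, List.prod_append, List.prod_cons, List.prod_nil,
      mul_one, ContinuousLinearMap.mul_apply]
    rw [heBb]
    rw [hJopΩ (y (Fin.last n)) (hy _) b hbM]
    rw [show (x (Fin.last n)) ((b * star (y (Fin.last n))) Ω)
      = ((x (Fin.last n) * (b * star (y (Fin.last n)))) Ω) from rfl]
    rw [heBap _ (mul_mem (hx _) (mul_mem hbM (star_mem (hy _))))]
    have hb'B : E (x (Fin.last n) * (b * star (y (Fin.last n)))) ∈ B :=
      hE_range _ (mul_mem (hx _) (mul_mem hbM (star_mem (hy _))))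
    have heBb' : eB ((E (x (Fin.last n) * (b * star (y (Fin.last n))))) Ω)
        = (E (x (Fin.last n) * (b * star (y (Fin.last n))))) Ω := by
      rw [heBap _ (hBM hb'B), hE_proj _ hb'B]
    have hIH := IH (fun i => x i.castSucc) (fun i => y i.castSucc)
      (fun i => hx _) (fun i => hy _)
      (E (x (Fin.last n) * (b * star (y (Fin.last n))))) hb'B
    simp only [ContinuousLinearMap.mul_apply] at hIH
    rw [← heBb', hIH]
    -- now identify the nestL expressions
    rw [List.ofFn_succ (f := fun i : Fin (n + 1) => x i.rev),
      List.ofFn_succ (f := fun i : Fin (n + 1) => star (y i.rev))]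
    simp only [Fin.rev_zero, Fin.rev_succ, nestL]
    rw [show x (Fin.last n) * b * star (y (Fin.last n))
      = x (Fin.last n) * (b * star (y (Fin.last n))) from (mul_assoc _ _ _)]


end AuxPeeling

/-- Let `M = M₁ *_B M₂` be a tracial amalgamated free product (with `B` mixing
in `M₂`).  For reduced words `x = x₁⋯xₙ` and `y = y₁⋯yₘ` with letters alternating in
`M₁° , M₂°` and with the first and last letters of both `x` and `y` in `M₂°`, one has on
`L²M`: `e_B x JyJ e_B = e_B(x₁Jy₁J) e_B (x₂Jy₂J) e_B ⋯ e_B(xₙJyₙJ) e_B` when `n = m`, and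
`e_B x JyJ e_B = 0` when `n ≠ m`. -/
theorem reduced_word_peeling_identity
    {H : Type*} [NormedAddCommGroup H] [InnerProductSpace ℂ H] [CompleteSpace H]
    (M M₁ M₂ B : StarSubalgebra ℂ (H →L[ℂ] H))
    (hB1 : B ≤ M₁) (hB2 : B ≤ M₂) (h1M : M₁ ≤ M) (h2M : M₂ ≤ M)
    (Ω : H)
    -- the trace τ = ⟪Ω, ·Ω⟫ is tracial and Ω is cyclic and separating
    (htrace : ∀ x ∈ M, ∀ y ∈ M, ⟪Ω, (x * y) Ω⟫_ℂ = ⟪Ω, (y * x) Ω⟫_ℂ)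
    (hcyclic : Dense ((Submodule.span ℂ {ξ : H | ∃ z ∈ M, ξ = z Ω}) : Set H))
    (hsep : ∀ z ∈ M, z Ω = 0 → z = 0)
    -- the trace-preserving conditional expectation E_B onto B
    (E : (H →L[ℂ] H) →ₗ[ℂ] (H →L[ℂ] H))
    (hE_range : ∀ z ∈ M, E z ∈ B)
    (hE_proj : ∀ b ∈ B, E b = b)
    (hE_bimod : ∀ b ∈ B, ∀ b' ∈ B, ∀ z ∈ M, E (b * z * b') = b * E z * b')
    -- the Jones projection e_B and its basic-construction property
    (eB : H →L[ℂ] H) (heB : IsIdempotentElem eB ∧ IsSelfAdjoint eB)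
    (hJones : ∀ z ∈ M, eB * z * eB = E z * eB)
    (heBΩ : eB Ω = Ω)
    -- the modular conjugation, via the map `Jop : y ↦ JyJ`, so that `Jop y ∈ M'`
    (Jop : (H →L[ℂ] H) → (H →L[ℂ] H))
    (hJop_mult : ∀ y ∈ M, ∀ z ∈ M, Jop (y * z) = Jop y * Jop z)
    (hJop_comm : ∀ y ∈ M, ∀ z ∈ M, Commute (Jop y) z)
    (hJop_eB : ∀ b ∈ B, Commute b eB ∧ Commute (Jop b) eB)
    (hJopΩ : ∀ y ∈ M, ∀ z ∈ M, (Jop y) (z Ω) = (z * star y) Ω)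
    (hJonesJ : ∀ z ∈ M, eB * Jop z * eB = Jop (E z) * eB)
    -- free independence with amalgamation over B: E_B vanishes on alternating centered words
    (hfree : ∀ (k : ℕ), 0 < k → ∀ (w : Fin k → (H →L[ℂ] H)) (idx : Fin k → Bool),
      (∀ i, if idx i then w i ∈ M₁ else w i ∈ M₂) →
      (∀ i, E (w i) = 0) →
      (∀ (i : Fin k) (h : (i : ℕ) + 1 < k), idx i ≠ idx ⟨(i : ℕ) + 1, h⟩) →
      E ((List.ofFn w).prod) = 0)
    -- the reduced words x = x₁⋯xₙ and y = y₁⋯yₘ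
    (n m : ℕ) (hn : 0 < n) (hm : 0 < m)
    (x : Fin n → (H →L[ℂ] H)) (y : Fin m → (H →L[ℂ] H))
    (σx : Fin n → Bool) (σy : Fin m → Bool)
    (hx_mem : ∀ i, if σx i then x i ∈ M₁ else x i ∈ M₂)
    (hy_mem : ∀ i, if σy i then y i ∈ M₁ else y i ∈ M₂)
    (hx_cent : ∀ i, E (x i) = 0) (hy_cent : ∀ i, E (y i) = 0)
    (hx_alt : ∀ (i : Fin n) (h : (i : ℕ) + 1 < n), σx i ≠ σx ⟨(i : ℕ) + 1, h⟩)
    (hy_alt : ∀ (i : Fin m) (h : (i : ℕ) + 1 < m), σy i ≠ σy ⟨(i : ℕ) + 1, h⟩)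
    -- first and last letters of both words lie in M₂°
    (hx_first : σx ⟨0, hn⟩ = false) (hx_last : σx ⟨n - 1, by omega⟩ = false)
    (hy_first : σy ⟨0, hm⟩ = false) (hy_last : σy ⟨m - 1, by omega⟩ = false) :
    (∀ h : n = m,
      eB * (List.ofFn x).prod * Jop ((List.ofFn y).prod) * eB
        = (List.ofFn (fun i : Fin n => eB * (x i * Jop (y (Fin.cast h i))))).prod * eB) ∧
    (n ≠ m → eB * (List.ofFn x).prod * Jop ((List.ofFn y).prod) * eB = 0) := by
  obtain ⟨n', rfl⟩ : ∃ k, n = k + 1 := ⟨n - 1, by omega⟩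
  obtain ⟨m', rfl⟩ : ∃ k, m = k + 1 := ⟨m - 1, by omega⟩
  have hBM : B ≤ M := le_trans hB1 h1M
  have hxM : ∀ i, x i ∈ M := by
    intro i
    have := hx_mem i
    cases h2 : σx i <;> rw [h2] at this <;> simp only [Bool.false_eq_true, if_false,
      if_true] at this
    · exact h2M this
    · exact h1M this
  have hyM : ∀ i, y i ∈ M := by
    intro i
    have := hy_mem i
    cases h2 : σy i <;> rw [h2] at this <;> simp only [Bool.false_eq_true, if_false,
      if_true] at this
    · exact h2M this
    · exact h1M this
  have heBap : ∀ z ∈ M, eB (z Ω) = E z Ω := aux_eB_apply M Ω E eB hJones heBΩ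
  have hstarE : ∀ z ∈ M, E (star z) = star (E z) :=
    aux_star_E M B hBM Ω hsep E hE_range eB heB.2 hJones heBΩ (fun b hb => (hJop_eB b hb).1)
  have hfreeL := aux_free_list M₁ M₂ E hfree
  have hprodmem := aux_prod_fst_mem M M₁ M₂ h1M h2M
  have hXM : (List.ofFn x).prod ∈ M := by
    apply list_prod_mem
    intro t ht
    rcases List.mem_ofFn.1 ht with ⟨i, rfl⟩
    exact hxM i
  have hYM : (List.ofFn y).prod ∈ M := by
    apply list_prod_mem
    intro t ht
    rcases List.mem_ofFn.1 ht with ⟨i, rfl⟩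
    exact hyM i
  -- the two auxiliary lists
  set rx : List ((H →L[ℂ] H) × Bool) :=
    List.ofFn (fun i : Fin (n' + 1) => (x i.rev, σx i.rev)) with hrxdef
  set lc : List ((H →L[ℂ] H) × Bool) :=
    List.ofFn (fun i : Fin (m' + 1) => (star (y i.rev), σy i.rev)) with hlcdef
  have haltx : ∀ (i j : Fin (n' + 1)), (i : ℕ) + 1 = (j : ℕ) → σx i ≠ σx j := by
    intro i j hij
    have hlt : (i : ℕ) + 1 < n' + 1 := hij ▸ j.isLt
    have := hx_alt i hlt
    convert this using 2
    exact Fin.ext hij.symm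
  have halty : ∀ (i j : Fin (m' + 1)), (i : ℕ) + 1 = (j : ℕ) → σy i ≠ σy j := by
    intro i j hij
    have hlt : (i : ℕ) + 1 < m' + 1 := hij ▸ j.isLt
    have := hy_alt i hlt
    convert this using 2
    exact Fin.ext hij.symm
  have hrxne : rx ≠ [] := by rw [hrxdef, List.ofFn_succ]; exact List.cons_ne_nil _ _
  have hlcne : lc ≠ [] := by rw [hlcdef, List.ofFn_succ]; exact List.cons_ne_nil _ _
  have hmx : ∀ p ∈ rx, if p.2 then p.1 ∈ M₁ else p.1 ∈ M₂ := by
    intro p hp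
    rcases List.mem_ofFn.1 hp with ⟨i, rfl⟩
    exact hx_mem i.rev
  have hmc : ∀ p ∈ lc, if p.2 then p.1 ∈ M₁ else p.1 ∈ M₂ := by
    intro p hp
    rcases List.mem_ofFn.1 hp with ⟨i, rfl⟩
    have := hy_mem i.rev
    cases h2 : σy i.rev <;> rw [h2] at this <;> simp only [Bool.false_eq_true, if_false,
      if_true] at this ⊢
    · exact star_mem this
    · exact star_mem this
  have hcx : ∀ p ∈ rx, E p.1 = 0 := by
    intro p hp
    rcases List.mem_ofFn.1 hp with ⟨i, rfl⟩
    exact hx_cent i.rev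
  have hcc : ∀ p ∈ lc, E p.1 = 0 := by
    intro p hp
    rcases List.mem_ofFn.1 hp with ⟨i, rfl⟩
    show E (star (y i.rev)) = 0
    rw [hstarE _ (hyM i.rev), hy_cent, star_zero]
  have hchx : rx.Chain' (fun p q => p.2 ≠ q.2) :=
    aux_chain_ofFn σx _ (fun i => rfl) haltx
  have hchc : lc.Chain' (fun p q => p.2 ≠ q.2) :=
    aux_chain_ofFn σy _ (fun i => rfl) halty
  have hhead : ∀ p ∈ rx.head?, ∀ q ∈ lc.head?, p.2 = q.2 := by
    intro p hp q hq
    rw [hrxdef, List.ofFn_succ] at hp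
    rw [hlcdef, List.ofFn_succ] at hq
    have hp' : (x (0 : Fin (n' + 1)).rev, σx (0 : Fin (n' + 1)).rev) = p := by simpa using hp
    have hq' : (star (y (0 : Fin (m' + 1)).rev), σy (0 : Fin (m' + 1)).rev) = q := by
      simpa using hq
    subst hp'; subst hq'
    show σx (0 : Fin (n' + 1)).rev = σy (0 : Fin (m' + 1)).rev
    rw [Fin.rev_zero, Fin.rev_zero]
    have h1 : Fin.last n' = (⟨n' + 1 - 1, by omega⟩ : Fin (n' + 1)) := Fin.ext (by simp)
    have h2 : Fin.last m' = (⟨m' + 1 - 1, by omega⟩ : Fin (m' + 1)) := Fin.ext (by simp)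
    rw [h1, h2, hx_last, hy_last]
  have key := keyL M M₁ M₂ B hB1 hB2 h1M h2M E hE_range hE_proj hE_bimod hfreeL hprodmem
    lc rx hrxne hlcne hmx hmc hcx hcc hchx hchc hhead
  -- identify the products
  have hXr : ((rx.map Prod.fst).reverse).prod = (List.ofFn x).prod := by
    rw [hrxdef, List.map_ofFn]
    rw [show (Prod.fst ∘ fun i : Fin (n' + 1) => (x i.rev, σx i.rev))
      = fun i => x i.rev from rfl]
    rw [aux_ofFn_rev, List.reverse_reverse]
  have hCs : ((lc.map Prod.fst)).prod = star ((List.ofFn y).prod) := by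
    rw [hlcdef, List.map_ofFn]
    rw [show (Prod.fst ∘ fun i : Fin (m' + 1) => (star (y i.rev), σy i.rev))
      = fun i => star (y i.rev) from rfl]
    rw [aux_star_prod, List.map_ofFn]
    exact congrArg List.prod (aux_ofFn_rev (fun i => star (y i)))
  have hlen_rx : rx.length = n' + 1 := by rw [hrxdef]; simp
  have hlen_lc : lc.length = m' + 1 := by rw [hlcdef]; simp
  -- evaluation of the left-hand side on vectors z Ω
  have hmain : ∀ z ∈ M, (eB * (List.ofFn x).prod * Jop ((List.ofFn y).prod) * eB) (z Ω)
      = (if n' + 1 = m' + 1 then nestL E (rx.map Prod.fst) (lc.map Prod.fst) (E z) else 0) Ω := by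
    intro z hz
    have hEzB : E z ∈ B := hE_range z hz
    have hEzM : E z ∈ M := hBM hEzB
    simp only [ContinuousLinearMap.mul_apply]
    rw [heBap z hz]
    rw [hJopΩ _ hYM _ hEzM]
    rw [show ((List.ofFn x).prod) ((E z * star ((List.ofFn y).prod)) Ω)
      = (((List.ofFn x).prod * (E z * star ((List.ofFn y).prod))) Ω) from rfl]
    rw [heBap _ (mul_mem hXM (mul_mem hEzM (star_mem hYM)))]
    have hk := key (E z) hEzB
    rw [hXr, hCs, hlen_rx, hlen_lc] at hk
    rw [show (List.ofFn x).prod * (E z * star ((List.ofFn y).prod))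
      = (List.ofFn x).prod * (E z) * star ((List.ofFn y).prod) from (mul_assoc _ _ _).symm]
    rw [hk]
  constructor
  · intro h
    have hm' : m' = n' := by omega
    subst hm'
    apply aux_ext_dense M Ω hcyclic
    intro z hz
    rw [hmain z hz, if_pos rfl]
    have hEzB : E z ∈ B := hE_range z hz
    have hcast : (fun i => eB * (x i * Jop (y (Fin.cast h i))))
        = fun i => eB * (x i * Jop (y i)) := by
      funext i
      congr 2
    rw [hcast]
    have hPA := prodApply M B hBM Ω E hE_range hE_proj eB heBap Jop hJopΩ _ x y
      hxM hyM (E z) hEzB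
    have heBz : eB (z Ω) = (E z) Ω := heBap z hz
    have heBEz : eB ((E z) Ω) = (E z) Ω := by
      rw [heBap _ (hBM hEzB), hE_proj _ hEzB]
    simp only [ContinuousLinearMap.mul_apply] at hPA ⊢
    rw [heBz, ← heBEz, hPA]
    rw [hrxdef, hlcdef, List.map_ofFn, List.map_ofFn]
    rfl
  · intro hne
    apply aux_ext_dense M Ω hcyclic _ 0
    intro z hz
    rw [hmain z hz, if_neg (by omega)]
    simp
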